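/- arXiv:2110.04287 — 2 statements merged into one kernel-verified Lean document; each statement's English description precedes it below -/
import Mathlib

section
/- Let A be a simple k-algebra and B a central simple k-algebra over a field k. For any two k-algebra homomorphisms f, g : A → B, there exists a unit b ∈ B× such that f(x) = b * g(x) * b⁻¹ for all x ∈ A. -/
/-!
Let `A ⊗ Bᵐᵒᵖ` act on `B` by `(a ⊗ b) • x = f a * x * b`, and likewise through `g`. As `B` is
central simple, `A ⊗ Bᵐᵒᵖ` is a simple finite-dimensional algebra, so each of its modules is a sum
of copies of one simple module and is determined up to isomorphism by its dimension over `k`.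
The two module structures on `B` are therefore isomorphic. An isomorphism commutes with right
multiplications, so it is left multiplication by a unit `u`, and commuting with the action of `A`
says exactly that `f a * u = u * g a`.
-/

open Module TensorProduct

theorem IsIsotypicOfType.finrank_eq_mul {k R M S : Type*} [Field k] [Ring R] [Algebra k R]
    [AddCommGroup M] [Module k M] [Module R M] [IsScalarTower k R M] [IsSemisimpleModule R M]
    [FiniteDimensional k M] [AddCommGroup S] [Module k S] [Module R S] [IsScalarTower k R S]
    [FiniteDimensional k S] (h : IsIsotypicOfType R M S) :
    ∃ n : ℕ, finrank k M = n * finrank k S ∧ Nonempty (M ≃ₗ[R] Fin n → S) := by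
  have : Module.Finite R M := .of_restrictScalars_finite k R M
  obtain ⟨n, ⟨e⟩⟩ := h.linearEquiv_fun
  refine ⟨n, ?_, ⟨e⟩⟩
  rw [(e.restrictScalars k).finrank_eq, Module.finrank_pi_fintype, Finset.sum_const,
    Finset.card_univ, Fintype.card_fin, smul_eq_mul]

theorem IsSimpleRing.nonempty_linearEquiv_of_finrank_eq (k : Type*) {R M N : Type*} [Field k]
    [Ring R] [Algebra k R] [IsSimpleRing R] [FiniteDimensional k R]
    [AddCommGroup M] [Module k M] [Module R M] [IsScalarTower k R M] [FiniteDimensional k M]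
    [AddCommGroup N] [Module k N] [Module R N] [IsScalarTower k R N] [FiniteDimensional k N]
    (h : finrank k M = finrank k N) : Nonempty (M ≃ₗ[R] N) := by
  have : IsArtinianRing R := .of_finite k R
  -- the factor `R` only serves to make the product nontrivial, so that it has a simple submodule
  obtain ⟨S, hS⟩ := IsAtomic.exists_atom (Submodule R (R × M × N))
  have : IsSimpleModule R S := isSimpleModule_iff_isAtom.mpr hS
  have : FiniteDimensional k S := .of_injective (S.subtype.restrictScalars k) S.subtype_injective
  have hP := IsSimpleRing.isIsotypic R (R × M × N) S
  obtain ⟨n, hM, ⟨eM⟩⟩ := (hP.of_injective (.inr R R (M × N) ∘ₗ .inl R M N)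
    (LinearMap.inr_injective.comp LinearMap.inl_injective)).finrank_eq_mul (k := k)
  obtain ⟨m, hN, ⟨eN⟩⟩ := (hP.of_injective (.inr R R (M × N) ∘ₗ .inr R M N)
    (LinearMap.inr_injective.comp LinearMap.inr_injective)).finrank_eq_mul (k := k)
  have : Nontrivial S := IsSimpleModule.nontrivial R S
  obtain rfl : n = m := Nat.eq_of_mul_eq_mul_right finrank_pos (hM ▸ hN ▸ h)
  exact ⟨eM.trans eN.symm⟩

namespace TensorProduct

variable {k A C ι : Type*} [Field k] [Ring A] [Algebra k A] [Ring C] [Algebra k C]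
  [DecidableEq ι] (b : Basis ι k A)

theorem equivFinsuppOfBasisLeft_one_tmul_mul (c : C) (z : A ⊗[k] C) (i : ι) :
    equivFinsuppOfBasisLeft b ((1 ⊗ₜ c) * z) i = c * equivFinsuppOfBasisLeft b z i := by
  induction z using TensorProduct.induction_on with
  | zero => simp
  | tmul a c => simp
  | add y w hy hw => simp only [mul_add, map_add, Finsupp.add_apply, hy, hw]

theorem equivFinsuppOfBasisLeft_mul_one_tmul (c : C) (z : A ⊗[k] C) (i : ι) :
    equivFinsuppOfBasisLeft b (z * (1 ⊗ₜ c)) i = equivFinsuppOfBasisLeft b z i * c := by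
  induction z using TensorProduct.induction_on with
  | zero => simp
  | tmul a c => simp
  | add y w hy hw => simp only [add_mul, map_add, Finsupp.add_apply, hy, hw]

theorem exists_mem_support_subset_equivFinsuppOfBasisLeft_eq_one [IsSimpleRing C]
    {I : TwoSidedIdeal (A ⊗[k] C)} {x : A ⊗[k] C} (hx : x ∈ I) {i : ι}
    (hi : equivFinsuppOfBasisLeft b x i ≠ 0) :
    ∃ y ∈ I, (equivFinsuppOfBasisLeft b y).support ⊆ (equivFinsuppOfBasisLeft b x).support ∧
      equivFinsuppOfBasisLeft b y i = 1 := by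
  set coeff := equivFinsuppOfBasisLeft (N := C) b
  suffices ∀ c ∈ TwoSidedIdeal.span {coeff x i},
      ∃ y ∈ I, (∀ j, coeff x j = 0 → coeff y j = 0) ∧ coeff y i = c by
    obtain ⟨y, hyI, hy, hyi⟩ := this 1 (IsSimpleRing.one_mem_of_ne_zero_mem _ hi
      (TwoSidedIdeal.subset_span rfl))
    exact ⟨y, hyI, fun j => by simpa only [Finsupp.mem_support_iff, not_imp_not] using hy j, hyi⟩
  intro c hc
  induction hc using TwoSidedIdeal.span_induction with
  | mem c hc => exact ⟨x, hx, fun _ => id, (Set.mem_singleton_iff.mp hc).symm⟩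
  | zero => exact ⟨0, I.zero_mem, fun _ _ => by simp, by simp⟩
  | add c d _ _ hc hd =>
    obtain ⟨y, hyI, hy, rfl⟩ := hc
    obtain ⟨z, hzI, hz, rfl⟩ := hd
    exact ⟨y + z, I.add_mem hyI hzI, fun j hj => by simp [hy j hj, hz j hj], by simp⟩
  | neg c _ hc =>
    obtain ⟨y, hyI, hy, rfl⟩ := hc
    exact ⟨-y, I.neg_mem hyI, fun j hj => by simp [hy j hj], by simp⟩
  | left_absorb a c _ hc =>
    obtain ⟨y, hyI, hy, rfl⟩ := hc
    exact ⟨(1 ⊗ₜ a) * y, I.mul_mem_left _ _ hyI, fun j hj => by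
      simp [coeff, equivFinsuppOfBasisLeft_one_tmul_mul, hy j hj],
      equivFinsuppOfBasisLeft_one_tmul_mul ..⟩
  | right_absorb a c _ hc =>
    obtain ⟨y, hyI, hy, rfl⟩ := hc
    exact ⟨y * (1 ⊗ₜ a), I.mul_mem_right _ _ hyI, fun j hj => by
      simp [coeff, equivFinsuppOfBasisLeft_mul_one_tmul, hy j hj],
      equivFinsuppOfBasisLeft_mul_one_tmul ..⟩

theorem exists_eq_tmul_one_of_forall_commute [Algebra.IsCentral k C] (z : A ⊗[k] C)
    (hz : ∀ c : C, Commute (1 ⊗ₜ c) z) : ∃ a : A, z = a ⊗ₜ 1 := by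
  classical
  have b : Basis _ k A := Basis.ofVectorSpace k A
  have hcentral : ∀ i, ∃ r : k, algebraMap k C r = equivFinsuppOfBasisLeft b z i := by
    intro i
    have hmem : equivFinsuppOfBasisLeft b z i ∈ Subalgebra.center k C :=
      Subalgebra.mem_center_iff.mpr fun c => by
        simpa only [equivFinsuppOfBasisLeft_one_tmul_mul, equivFinsuppOfBasisLeft_mul_one_tmul]
          using congr(equivFinsuppOfBasisLeft b $((hz c).eq) i)
    exact Algebra.mem_bot.mp (Algebra.IsCentral.out hmem)
  choose r hr using hcentral
  refine ⟨(equivFinsuppOfBasisLeft b z).sum fun i _ => r i • b i, ?_⟩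
  conv_lhs => rw [← (equivFinsuppOfBasisLeft b).symm_apply_apply z]
  simp only [equivFinsuppOfBasisLeft_symm_apply, Finsupp.sum, sum_tmul, ← hr,
    Algebra.algebraMap_eq_smul_one, tmul_smul, smul_tmul']

/- Among the nonzero elements of `I`, take one with fewest nonzero coefficients in a basis of `A`
and use the simplicity of `C` to make one coefficient `1`. Its commutators with the `1 ⊗ c` then
have fewer nonzero coefficients, hence vanish, so by centrality of `C` it has the form `a ⊗ 1`. -/
theorem exists_ne_zero_tmul_one_mem [IsSimpleRing C] [Algebra.IsCentral k C]
    {I : TwoSidedIdeal (A ⊗[k] C)} (hI : I ≠ ⊥) : ∃ a : A, a ≠ 0 ∧ a ⊗ₜ 1 ∈ I := by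
  classical
  have b : Basis _ k A := Basis.ofVectorSpace k A
  obtain ⟨x, hxI, hx0⟩ := SetLike.exists_of_lt (bot_lt_iff_ne_bot.mpr hI)
  rw [TwoSidedIdeal.mem_bot] at hx0
  induction hn : (equivFinsuppOfBasisLeft b x).support.card using Nat.strong_induction_on
    generalizing x with
  | _ n ih =>
  obtain ⟨i, hi⟩ : ∃ i, equivFinsuppOfBasisLeft b x i ≠ 0 := Finsupp.ne_iff.mp
    ((map_ne_zero_iff _ (equivFinsuppOfBasisLeft b).injective).mpr hx0)
  obtain ⟨y, hyI, hyx, hyi⟩ := exists_mem_support_subset_equivFinsuppOfBasisLeft_eq_one b hxI hi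
  by_cases hcomm : ∀ c : C, Commute (1 ⊗ₜ c) y
  · obtain ⟨a, rfl⟩ := exists_eq_tmul_one_of_forall_commute y hcomm
    exact ⟨a, by rintro rfl; simp at hyi, hyI⟩
  obtain ⟨c, hc⟩ := not_forall.mp hcomm
  have hsupp : (equivFinsuppOfBasisLeft b ((1 ⊗ₜ c) * y - y * (1 ⊗ₜ c))).support ⊆
      (equivFinsuppOfBasisLeft b y).support.erase i := by
    intro j hj
    simp only [Finsupp.mem_support_iff, map_sub, Finsupp.sub_apply,
      equivFinsuppOfBasisLeft_one_tmul_mul, equivFinsuppOfBasisLeft_mul_one_tmul] at hj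
    refine Finset.mem_erase.mpr ⟨?_, Finsupp.mem_support_iff.mpr ?_⟩
    · rintro rfl; simp [hyi] at hj
    · intro h; simp [h] at hj
  refine ih _ ?_ _ (I.sub_mem (I.mul_mem_left _ _ hyI) (I.mul_mem_right _ _ hyI))
    (sub_ne_zero.mpr hc) rfl
  calc _ ≤ ((equivFinsuppOfBasisLeft b y).support.erase i).card := Finset.card_le_card hsupp
    _ < (equivFinsuppOfBasisLeft b y).support.card := Finset.card_erase_lt_of_mem (by simp [hyi])
    _ ≤ n := hn ▸ Finset.card_le_card hyx

end TensorProduct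

instance Algebra.TensorProduct.isSimpleRing {k A C : Type*} [Field k] [Ring A] [Algebra k A]
    [IsSimpleRing A] [Ring C] [Algebra k C] [IsSimpleRing C] [Algebra.IsCentral k C] :
    IsSimpleRing (A ⊗[k] C) := by
  refine .of_eq_bot_or_eq_top fun I => or_iff_not_imp_left.mpr fun hI => ?_
  obtain ⟨a, ha, haI⟩ := exists_ne_zero_tmul_one_mem hI
  have h1 : (1 : A) ∈ TwoSidedIdeal.comap (includeLeft : A →ₐ[k] A ⊗[k] C) I :=
    IsSimpleRing.one_mem_of_ne_zero_mem _ ha ((TwoSidedIdeal.mem_comap _).mpr haI)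
  exact (TwoSidedIdeal.one_mem_iff I).mp ((TwoSidedIdeal.mem_comap _).mp h1)

theorem exists_unit_eq_mul_of_bijective_of_map_mul {M : Type*} [Monoid M] {E : M → M}
    (hE : Function.Bijective E) (hmul : ∀ x y, E (x * y) = E x * y) :
    ∃ u : Mˣ, ∀ x, E x = u * x := by
  have hE1 : ∀ x, E x = E 1 * x := fun x => by rw [← hmul, one_mul]
  obtain ⟨d, hd⟩ := hE.2 1
  have hd' : E 1 * d = 1 := by rw [← hE1, hd]
  have hd'' : d * E 1 = 1 := hE.1 (by rw [hmul, hd, one_mul])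
  exact ⟨⟨E 1, d, hd', hd''⟩, hE1⟩

namespace AlgHom

variable {k A B : Type*} [Field k] [Ring A] [Algebra k A] [Ring B] [Algebra k B]

/-- `B` as a module over `A ⊗[k] Bᵐᵒᵖ`, with `a ⊗ op b` acting by `x ↦ f a * x * b`. -/
def Bimodule (_f : A →ₐ[k] B) : Type _ := B

noncomputable def bimoduleAction (f : A →ₐ[k] B) : A ⊗[k] Bᵐᵒᵖ →ₐ[k] Module.End k B :=
  Algebra.TensorProduct.lift ((Algebra.lsmul k k B).comp f) (Algebra.lsmul k k B)
    fun a b => LinearMap.ext fun x => (mul_assoc (f a) x b.unop).symm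

variable (f : A →ₐ[k] B)

noncomputable instance : AddCommGroup f.Bimodule := inferInstanceAs (AddCommGroup B)

noncomputable instance : Module k f.Bimodule := inferInstanceAs (Module k B)

instance [FiniteDimensional k B] : FiniteDimensional k f.Bimodule :=
  inferInstanceAs (FiniteDimensional k B)

noncomputable instance : Module (A ⊗[k] Bᵐᵒᵖ) f.Bimodule :=
  Module.compHom B (bimoduleAction f).toRingHom

instance : IsScalarTower k (A ⊗[k] Bᵐᵒᵖ) f.Bimodule where
  smul_assoc c r x := congr($(map_smul (bimoduleAction f) c r) x)

def Bimodule.of : B ≃ₗ[k] f.Bimodule := LinearEquiv.refl k B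

theorem Bimodule.tmul_smul (a : A) (b : Bᵐᵒᵖ) (z : f.Bimodule) :
    (a ⊗ₜ[k] b) • z = Bimodule.of f (f a * (Bimodule.of f).symm z * b.unop) :=
  (mul_assoc (f a) _ b.unop).symm

end AlgHom

/-- **Skolem–Noether theorem.** For a simple finite-dimensional `k`-algebra `A` and a
central simple finite-dimensional `k`-algebra `B`, any two `k`-algebra homomorphisms
`f g : A →ₐ[k] B` are conjugate by a unit of `B`. -/
theorem skolem_noether (k : Type*) [Field k] (A B : Type*) [Ring A] [Algebra k A]
    [IsSimpleRing A] [FiniteDimensional k A] [Ring B] [Algebra k B]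
    [Algebra.IsCentral k B] [IsSimpleRing B] [FiniteDimensional k B]
    (f g : A →ₐ[k] B) :
    ∃ b : Bˣ, ∀ x : A, f x = (b : B) * g x * ((b⁻¹ : Bˣ) : B) := by
  obtain ⟨e⟩ := IsSimpleRing.nonempty_linearEquiv_of_finrank_eq k
    -- a bare `rfl` would be elaborated before the module instances of the synonyms are fixed
    (R := A ⊗[k] Bᵐᵒᵖ) (M := g.Bimodule) (N := f.Bimodule) (by rfl)
  let E : B ≃ₗ[k] B :=
    (AlgHom.Bimodule.of g).trans ((e.restrictScalars k).trans (AlgHom.Bimodule.of f).symm)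
  have hE : ∀ (a : A) (x y : B), E (g a * x * y) = f a * E x * y := fun a x y => by
    simpa [E, AlgHom.Bimodule.tmul_smul] using
      congr((AlgHom.Bimodule.of f).symm $(e.map_smul (a ⊗ₜ[k] .op y) (AlgHom.Bimodule.of g x)))
  obtain ⟨u, hu⟩ := exists_unit_eq_mul_of_bijective_of_map_mul E.bijective
    fun x y => by simpa using hE 1 x y
  refine ⟨u, fun a => ?_⟩
  have h := hE a 1 1
  simp only [mul_one, hu] at h
  rw [h, Units.mul_inv_cancel_right]
end

section
/- Let R be a commutative ring, S an R-algebra, M a finitely presented S-module, and R → R' a flat ring map. Then the natural map (Ann_S M) ⊗_R R' → Ann_{S ⊗_R R'} (M ⊗_R R') is an isomorphism. -/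
open TensorProduct

/-- The annihilator of a finitely generated module commutes with flat base change. -/
theorem annihilator_baseChange_of_flat (S T M : Type*) [CommRing S] [CommRing T] [Algebra S T]
    [Module.Flat S T] [AddCommGroup M] [Module S M] [Module.Finite S M] :
    Module.annihilator T (T ⊗[S] M) =
      Ideal.map (algebraMap S T) (Module.annihilator S M) := by
  obtain ⟨n, x, hx⟩ := Module.Finite.exists_fin (R := S) (M := M)
  set φ : S →ₗ[S] (Fin n → M) :=
    LinearMap.pi (fun i => LinearMap.toSpanSingleton S M (x i)) with hφ
  have hker : LinearMap.ker φ = (Module.annihilator S M : Submodule S S) := by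
    ext s
    rw [LinearMap.mem_ker, ← Submodule.annihilator_top, ← hx,
      Submodule.mem_annihilator_span]
    constructor
    · rintro h ⟨y, i, rfl⟩
      have := congrFun h i
      simpa [φ] using this
    · intro h
      funext i
      simpa [φ] using h ⟨x i, ⟨i, rfl⟩⟩
  apply le_antisymm
  · intro a ha
    -- hard direction using flatness
    have h1 : a ⊗ₜ[S] (1 : S) ∈ LinearMap.ker (AlgebraTensorModule.lTensor T T φ) := by
      rw [LinearMap.mem_ker]
      have : AlgebraTensorModule.lTensor T T φ (a ⊗ₜ[S] (1 : S)) = a ⊗ₜ[S] (φ 1) := rfl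
      rw [this]
      apply (TensorProduct.piRight S T T (fun _ : Fin n => M)).injective
      rw [map_zero]
      funext i
      have : (TensorProduct.piRight S T T (fun _ : Fin n => M)) (a ⊗ₜ[S] (φ 1)) i
          = a ⊗ₜ[S] (φ 1 i) := by
        simp [TensorProduct.piRight, TensorProduct.piRightHom_tmul]
      rw [this]
      have h2 : a ⊗ₜ[S] (φ 1 i) = a • ((1 : T) ⊗ₜ[S] (φ 1 i)) := by
        rw [smul_tmul', smul_eq_mul, mul_one]
      rw [h2, Module.mem_annihilator.mp ha, Pi.zero_apply]
    rw [Module.Flat.ker_lTensor_eq] at h1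
    obtain ⟨y, hy⟩ := h1
    have key : ∀ y : T ⊗[S] (LinearMap.ker φ),
        (Algebra.TensorProduct.rid S T T)
          (AlgebraTensorModule.lTensor T T (LinearMap.ker φ).subtype y) ∈
          Ideal.map (algebraMap S T) (Module.annihilator S M) := by
      intro y
      induction y with
      | zero => simp
      | tmul t s =>
        have : (Algebra.TensorProduct.rid S T T)
            (AlgebraTensorModule.lTensor T T (LinearMap.ker φ).subtype (t ⊗ₜ[S] s))
            = (s : S) • t := by
          simp
        rw [this, Algebra.smul_def]
        exact Ideal.mul_mem_right _ _
          (Ideal.mem_map_of_mem _ (by rw [← hker]; exact s.2))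
      | add u v hu hv =>
        rw [map_add, map_add]
        exact Ideal.add_mem _ hu hv
    have := key y
    rw [hy] at this
    simpa using this
  · rw [Ideal.map_le_iff_le_comap]
    intro s hs
    rw [Ideal.mem_comap, Module.mem_annihilator]
    intro m
    induction m with
    | zero => simp
    | tmul t m =>
      rw [algebraMap_smul, ← tmul_smul, Module.mem_annihilator.mp hs m, tmul_zero]
    | add u v hu hv => rw [smul_add, hu, hv, add_zero]

/-- For a finitely presented `S`-module `M` (with `S` an `R`-algebra) and a flat base change
`R → R'`, the annihilator of the base-changed module `M ⊗_R R' ≅ (S ⊗_R R') ⊗_S M` over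
`S ⊗_R R'` is the extension of the annihilator of `M` over `S`. -/
theorem annihilator_flat_base_change (R S R' : Type*) [CommRing R] [CommRing S] [CommRing R']
    [Algebra R S] [Algebra R R'] [Module.Flat R R'] (M : Type*) [AddCommGroup M] [Module S M]
    [Module.FinitePresentation S M] :
    Module.annihilator (S ⊗[R] R') ((S ⊗[R] R') ⊗[S] M) =
      Ideal.map (algebraMap S (S ⊗[R] R')) (Module.annihilator S M) := by
  exact annihilator_baseChange_of_flat S (S ⊗[R] R') M
end
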